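/- arXiv:2408.12564 — 2 statements merged into one kernel-verified Lean document; each statement's English description precedes it below -/
import Mathlib

section
/- Let U ∈ R^{d×r} and V ∈ R^{d×r} have orthonormal columns, M ∈ R^{d×k} have orthonormal columns, and x ∈ R^k. If ‖U^T M‖ ≤ 1/2 and ‖U U^T − V V^T‖ ≤ 1/4, then ‖(I − V V^T) M x‖ ≥ (1/4)‖x‖. -/
/-!
Since `M` is an isometry, `y = M x` has `‖y‖ = ‖x‖`. As `1 - U Uᵀ` is the orthogonal projection
onto the complement of the column space of `U`, Pythagoras gives
`‖(1 - U Uᵀ) y‖² = ‖y‖² - ‖Uᵀ y‖² ≥ (3/4) ‖x‖²`, so `‖(1 - U Uᵀ) y‖ ≥ ‖x‖ / 2`. Replacing `U Uᵀ`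
by `V Vᵀ` costs at most `‖x‖ / 4` by the triangle inequality.
-/

open Matrix

noncomputable def opNorm {m n : ℕ} (A : Matrix (Fin m) (Fin n) ℝ) : ℝ :=
  ‖LinearMap.toContinuousLinearMap (Matrix.toEuclideanLin A)‖

namespace Matrix

variable {m n : Type*} [Fintype m] [Fintype n] [DecidableEq m] [DecidableEq n]

theorem inner_toEuclideanLin_left (A : Matrix m n ℝ) (u : EuclideanSpace ℝ n)
    (v : EuclideanSpace ℝ m) :
    inner ℝ (toEuclideanLin A u) v = inner ℝ u (toEuclideanLin Aᵀ v) := by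
  rw [← conjTranspose_eq_transpose_of_trivial, toEuclideanLin_conjTranspose_eq_adjoint,
    LinearMap.adjoint_inner_right]

theorem norm_toEuclideanLin_of_transpose_mul_self {A : Matrix m n ℝ} (hA : Aᵀ * A = 1)
    (v : EuclideanSpace ℝ n) : ‖toEuclideanLin A v‖ = ‖v‖ := by
  have h : ‖toEuclideanLin A v‖ ^ 2 = ‖v‖ ^ 2 := by
    rw [← real_inner_self_eq_norm_sq, inner_toEuclideanLin_left, ← LinearMap.comp_apply,
      ← toLpLin_mul_same, hA, toLpLin_one, LinearMap.id_apply, real_inner_self_eq_norm_sq]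
  exact (sq_eq_sq₀ (norm_nonneg _) (norm_nonneg _)).1 h

theorem norm_sq_toEuclideanLin_one_sub_mul_transpose {U : Matrix m n ℝ} (hU : Uᵀ * U = 1)
    (y : EuclideanSpace ℝ m) :
    ‖toEuclideanLin (1 - U * Uᵀ) y‖ ^ 2 = ‖y‖ ^ 2 - ‖toEuclideanLin Uᵀ y‖ ^ 2 := by
  set z := toEuclideanLin Uᵀ y
  have hsplit : toEuclideanLin (1 - U * Uᵀ) y = y - toEuclideanLin U z := by
    simp [z]
  have hker : (1 - U * Uᵀ)ᵀ * U = 0 := by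
    simp [Matrix.sub_mul, Matrix.mul_assoc, hU]
  have horth : inner ℝ (toEuclideanLin (1 - U * Uᵀ) y) (toEuclideanLin U z) = 0 := by
    rw [inner_toEuclideanLin_left, ← LinearMap.comp_apply, ← toLpLin_mul_same, hker, map_zero,
      LinearMap.zero_apply, inner_zero_right]
  have hpyth := norm_add_sq_eq_norm_sq_add_norm_sq_real horth
  rw [hsplit, sub_add_cancel, norm_toEuclideanLin_of_transpose_mul_self hU] at hpyth
  rw [hsplit]
  nlinarith

end Matrix

theorem norm_toEuclideanLin_le_opNorm {m n : ℕ} (A : Matrix (Fin m) (Fin n) ℝ)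
    (v : EuclideanSpace ℝ (Fin n)) : ‖toEuclideanLin A v‖ ≤ opNorm A * ‖v‖ :=
  (LinearMap.toContinuousLinearMap (toEuclideanLin A)).le_opNorm v

theorem stmt2_general {d r k : ℕ} (U V : Matrix (Fin d) (Fin r) ℝ) (M : Matrix (Fin d) (Fin k) ℝ)
    (hU : Uᵀ * U = 1) (hM : Mᵀ * M = 1)
    (x : EuclideanSpace ℝ (Fin k))
    (hUM : opNorm (Uᵀ * M) ≤ 1 / 2)
    (hUV : opNorm (U * Uᵀ - V * Vᵀ) ≤ 1 / 4) :
    (1 / 4) * ‖x‖ ≤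
      ‖Matrix.toEuclideanLin ((1 : Matrix (Fin d) (Fin d) ℝ) - V * Vᵀ)
        (Matrix.toEuclideanLin M x)‖ := by
  set y := toEuclideanLin M x
  have hy : ‖y‖ = ‖x‖ := norm_toEuclideanLin_of_transpose_mul_self hM x
  have hUy : ‖toEuclideanLin Uᵀ y‖ ≤ 1 / 2 * ‖x‖ := by
    have hle := norm_toEuclideanLin_le_opNorm (Uᵀ * M) x
    rw [toLpLin_mul_same, LinearMap.comp_apply] at hle
    exact hle.trans (by gcongr)
  have hperp : 1 / 2 * ‖x‖ ≤ ‖toEuclideanLin (1 - U * Uᵀ) y‖ := by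
    have hsq := norm_sq_toEuclideanLin_one_sub_mul_transpose hU y
    rw [← pow_le_pow_iff_left₀ (by positivity) (norm_nonneg _) two_ne_zero, hsq, hy]
    nlinarith [norm_nonneg (toEuclideanLin Uᵀ y)]
  have hpert : ‖toEuclideanLin (U * Uᵀ - V * Vᵀ) y‖ ≤ 1 / 4 * ‖x‖ := by
    rw [← hy]
    exact (norm_toEuclideanLin_le_opNorm _ y).trans (by gcongr)
  have hsplit : toEuclideanLin (1 - V * Vᵀ) y
      = toEuclideanLin (1 - U * Uᵀ) y + toEuclideanLin (U * Uᵀ - V * Vᵀ) y := by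
    rw [← LinearMap.add_apply, ← map_add, sub_add_sub_cancel]
  calc 1 / 4 * ‖x‖
      ≤ ‖toEuclideanLin (1 - U * Uᵀ) y‖ - ‖toEuclideanLin (U * Uᵀ - V * Vᵀ) y‖ := by linarith
    _ ≤ ‖toEuclideanLin (1 - V * Vᵀ) y‖ := hsplit ▸ norm_sub_le_norm_add _ _

theorem stmt2 {d r k : ℕ} (U V : Matrix (Fin d) (Fin r) ℝ) (M : Matrix (Fin d) (Fin k) ℝ)
    (hU : Uᵀ * U = 1) (hV : Vᵀ * V = 1) (hM : Mᵀ * M = 1)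
    (x : EuclideanSpace ℝ (Fin k))
    (hUM : opNorm (Uᵀ * M) ≤ 1 / 2)
    (hUV : opNorm (U * Uᵀ - V * Vᵀ) ≤ 1 / 4) :
    (1 / 4) * ‖x‖ ≤
      ‖Matrix.toEuclideanLin ((1 : Matrix (Fin d) (Fin d) ℝ) - V * Vᵀ)
        (Matrix.toEuclideanLin M x)‖ :=
  stmt2_general U V M hU hM x hUM hUV
end

section
/- Let Σ = U Λ U^T + M Λ̃ M^T where U ∈ R^{d×r} and M ∈ R^{d×k} have orthonormal columns, and Λ, Λ̃ are diagonal positive semidefinite. Define Σ̃ = U Λ U^T + (I − U U^T) M Λ̃ M^T (I − U U^T). Then ‖Σ − Σ̃‖ ≤ 3 ‖U^T M‖ · ‖Λ̃‖, where ‖·‖ is the operator norm. -/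
open Matrix

open scoped Matrix.Norms.L2Operator

lemma my_opNorm_eq {m n : ℕ} (A : Matrix (Fin m) (Fin n) ℝ) : opNorm A = ‖A‖ := rfl

lemma my_norm_one_le (n : ℕ) : ‖(1 : Matrix (Fin n) (Fin n) ℝ)‖ ≤ 1 := by
  rw [Matrix.cstar_norm_def, _root_.map_one]
  exact ContinuousLinearMap.norm_id_le

lemma my_norm_isometry_le {m n : ℕ} (U : Matrix (Fin m) (Fin n) ℝ)
    (hU : Uᵀ * U = 1) : ‖U‖ ≤ 1 := by
  have h := Matrix.l2_opNorm_conjTranspose_mul_self U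
  rw [Matrix.conjTranspose_eq_transpose_of_trivial, hU] at h
  have h1 := my_norm_one_le n
  nlinarith [norm_nonneg U]

lemma my_norm_transpose {m n : ℕ} (A : Matrix (Fin m) (Fin n) ℝ) : ‖Aᵀ‖ = ‖A‖ := by
  rw [← Matrix.conjTranspose_eq_transpose_of_trivial]
  exact Matrix.l2_opNorm_conjTranspose A

theorem stmt5 {d r k : ℕ} (U : Matrix (Fin d) (Fin r) ℝ) (M : Matrix (Fin d) (Fin k) ℝ)
    (hU : Uᵀ * U = 1) (hM : Mᵀ * M = 1)
    (Λ : Matrix (Fin r) (Fin r) ℝ) (Λ' : Matrix (Fin k) (Fin k) ℝ)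
    (hΛd : Λ.IsDiag) (hΛ'd : Λ'.IsDiag) (hΛ : Λ.PosSemidef) (hΛ' : Λ'.PosSemidef) :
    opNorm ((U * Λ * Uᵀ + M * Λ' * Mᵀ) -
        (U * Λ * Uᵀ +
          ((1 : Matrix (Fin d) (Fin d) ℝ) - U * Uᵀ) * (M * Λ' * Mᵀ) *
            ((1 : Matrix (Fin d) (Fin d) ℝ) - U * Uᵀ))) ≤
      3 * opNorm (Uᵀ * M) * opNorm Λ' := by
  simp only [my_opNorm_eq]
  have hT : (Uᵀ * M)ᵀ = Mᵀ * U := by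
    rw [Matrix.transpose_mul, Matrix.transpose_transpose]
  have e1 : (U * Uᵀ) * (M * Λ' * Mᵀ) = U * ((Uᵀ * M) * (Λ' * Mᵀ)) := by
    simp only [Matrix.mul_assoc]
  have e2 : (M * Λ' * Mᵀ) * (U * Uᵀ) = (M * (Λ' * ((Uᵀ * M)ᵀ))) * Uᵀ := by
    rw [hT]; simp only [Matrix.mul_assoc]
  have hdec : (U * Λ * Uᵀ + M * Λ' * Mᵀ) -
      (U * Λ * Uᵀ + ((1 : Matrix (Fin d) (Fin d) ℝ) - U * Uᵀ) * (M * Λ' * Mᵀ) *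
        ((1 : Matrix (Fin d) (Fin d) ℝ) - U * Uᵀ)) =
      (U * Uᵀ) * (M * Λ' * Mᵀ) +
        ((1 : Matrix (Fin d) (Fin d) ℝ) - U * Uᵀ) * ((M * Λ' * Mᵀ) * (U * Uᵀ)) := by
    generalize U * Λ * Uᵀ = T
    generalize U * Uᵀ = P
    generalize M * Λ' * Mᵀ = S
    noncomm_ring
  rw [hdec, e1, e2]
  -- basic norm facts
  have hUn : ‖U‖ ≤ 1 := my_norm_isometry_le U hU
  have hMn : ‖M‖ ≤ 1 := my_norm_isometry_le M hM
  have hUtn : ‖Uᵀ‖ ≤ 1 := by rw [my_norm_transpose]; exact hUn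
  have hMtn : ‖Mᵀ‖ ≤ 1 := by rw [my_norm_transpose]; exact hMn
  have hQn : ‖(1 : Matrix (Fin d) (Fin d) ℝ) - U * Uᵀ‖ ≤ 1 := by
    have hPP : U * Uᵀ * (U * Uᵀ) = U * Uᵀ := by
      rw [Matrix.mul_assoc, ← Matrix.mul_assoc Uᵀ, hU, Matrix.one_mul]
    have hidem : ((1 : Matrix (Fin d) (Fin d) ℝ) - U * Uᵀ) * (1 - U * Uᵀ) =
        1 - U * Uᵀ := by
      have h' : ((1 : Matrix (Fin d) (Fin d) ℝ) - U * Uᵀ) * (1 - U * Uᵀ) =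
          1 - U * Uᵀ - U * Uᵀ + U * Uᵀ * (U * Uᵀ) := by
        generalize U * Uᵀ = P
        noncomm_ring
      rw [h', hPP]; abel
    have hsym : ((1 : Matrix (Fin d) (Fin d) ℝ) - U * Uᵀ)ᴴ = 1 - U * Uᵀ := by
      rw [Matrix.conjTranspose_eq_transpose_of_trivial, Matrix.transpose_sub,
        Matrix.transpose_one, Matrix.transpose_mul, Matrix.transpose_transpose]
    have h := Matrix.l2_opNorm_conjTranspose_mul_self
      ((1 : Matrix (Fin d) (Fin d) ℝ) - U * Uᵀ)
    rw [hsym, hidem] at h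
    nlinarith [norm_nonneg ((1 : Matrix (Fin d) (Fin d) ℝ) - U * Uᵀ)]
  -- bound the first term
  have h1 : ‖U * ((Uᵀ * M) * (Λ' * Mᵀ))‖ ≤ ‖Uᵀ * M‖ * ‖Λ'‖ := by
    calc ‖U * ((Uᵀ * M) * (Λ' * Mᵀ))‖
        ≤ ‖U‖ * ‖(Uᵀ * M) * (Λ' * Mᵀ)‖ := Matrix.l2_opNorm_mul _ _
      _ ≤ ‖U‖ * (‖Uᵀ * M‖ * ‖Λ' * Mᵀ‖) :=
          mul_le_mul_of_nonneg_left (Matrix.l2_opNorm_mul _ _) (norm_nonneg _)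
      _ ≤ ‖U‖ * (‖Uᵀ * M‖ * (‖Λ'‖ * ‖Mᵀ‖)) :=
          mul_le_mul_of_nonneg_left
            (mul_le_mul_of_nonneg_left (Matrix.l2_opNorm_mul _ _) (norm_nonneg _))
            (norm_nonneg _)
      _ ≤ 1 * (‖Uᵀ * M‖ * (‖Λ'‖ * 1)) := by gcongr
      _ = ‖Uᵀ * M‖ * ‖Λ'‖ := by ring
  -- bound the second term
  have h2 : ‖((1 : Matrix (Fin d) (Fin d) ℝ) - U * Uᵀ) * ((M * (Λ' * ((Uᵀ * M)ᵀ))) * Uᵀ)‖ ≤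
      ‖Uᵀ * M‖ * ‖Λ'‖ := by
    have hTn : ‖(Uᵀ * M)ᵀ‖ = ‖Uᵀ * M‖ := my_norm_transpose _
    calc ‖((1 : Matrix (Fin d) (Fin d) ℝ) - U * Uᵀ) * ((M * (Λ' * ((Uᵀ * M)ᵀ))) * Uᵀ)‖
        ≤ ‖(1 : Matrix (Fin d) (Fin d) ℝ) - U * Uᵀ‖ * ‖(M * (Λ' * ((Uᵀ * M)ᵀ))) * Uᵀ‖ :=
          Matrix.l2_opNorm_mul _ _
      _ ≤ ‖(1 : Matrix (Fin d) (Fin d) ℝ) - U * Uᵀ‖ * (‖M * (Λ' * ((Uᵀ * M)ᵀ))‖ * ‖Uᵀ‖) :=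
          mul_le_mul_of_nonneg_left (Matrix.l2_opNorm_mul _ _) (norm_nonneg _)
      _ ≤ ‖(1 : Matrix (Fin d) (Fin d) ℝ) - U * Uᵀ‖ * ((‖M‖ * ‖Λ' * ((Uᵀ * M)ᵀ)‖) * ‖Uᵀ‖) :=
          mul_le_mul_of_nonneg_left
            (mul_le_mul_of_nonneg_right (Matrix.l2_opNorm_mul _ _) (norm_nonneg _))
            (norm_nonneg _)
      _ ≤ ‖(1 : Matrix (Fin d) (Fin d) ℝ) - U * Uᵀ‖ *
            ((‖M‖ * (‖Λ'‖ * ‖(Uᵀ * M)ᵀ‖)) * ‖Uᵀ‖) :=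
          mul_le_mul_of_nonneg_left
            (mul_le_mul_of_nonneg_right
              (mul_le_mul_of_nonneg_left (Matrix.l2_opNorm_mul _ _) (norm_nonneg _))
              (norm_nonneg _))
            (norm_nonneg _)
      _ ≤ 1 * ((1 * (‖Λ'‖ * ‖(Uᵀ * M)ᵀ‖)) * 1) := by gcongr
      _ = ‖Uᵀ * M‖ * ‖Λ'‖ := by rw [hTn]; ring
  have htr := norm_add_le (U * ((Uᵀ * M) * (Λ' * Mᵀ)))
    (((1 : Matrix (Fin d) (Fin d) ℝ) - U * Uᵀ) * ((M * (Λ' * ((Uᵀ * M)ᵀ))) * Uᵀ))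
  have hts : 0 ≤ ‖Uᵀ * M‖ * ‖Λ'‖ := mul_nonneg (norm_nonneg _) (norm_nonneg _)
  linarith
end
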